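/- Let n ≥ 2 and 0 ≤ l ≤ n. Then Tr(F_3 · C_l) = 4·(l-1)·C(n,l) if l is odd, and Tr(F_3 · C_l) = 0 if l is even. -/

import Mathlib

open Finset Matrix

noncomputable section

/-- Hamming weight of a basis label. -/
def hw {n : ℕ} (z : Fin n → Bool) : ℕ := (Finset.univ.filter fun i => z i = true).card

/-- The sign `(-1)^{z i}` of a bit. -/
def sgn (b : Bool) : ℂ := if b = true then -1 else 1

/-- The operator `C_l`: the diagonal matrix with entry
`∑_{S ⊆ Fin n, |S| = l} ∏_{i ∈ S} (-1)^{z i}`. -/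
def Cmat (n l : ℕ) : Matrix (Fin n → Bool) (Fin n → Bool) ℂ :=
  Matrix.diagonal fun z => ∑ S ∈ Finset.powersetCard l (Finset.univ : Finset (Fin n)),
    ∏ i ∈ S, sgn (z i)

/-- The projector `Π_m` onto the Hamming-weight-`m` sector. -/
def Pimat (n m : ℕ) : Matrix (Fin n → Bool) (Fin n → Bool) ℂ :=
  Matrix.diagonal fun z => if hw z = m then 1 else 0

/-- The operator `F_3 = (n-2)(Π_0 - Π_n) - (Π_1 - Π_{n-1})`. -/
def F3mat (n : ℕ) : Matrix (Fin n → Bool) (Fin n → Bool) ℂ :=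
  ((n : ℂ) - 2) • (Pimat n 0 - Pimat n n) - (Pimat n 1 - Pimat n (n-1))

/-!
The diagonal entry of `C_l` at `z` is the elementary symmetric polynomial `e_l` of the signs
`(-1)^{z i}`, and `F_3` only sees the weights `0, 1, n - 1, n`. Flipping every bit exchanges
weight `m` with weight `n - m` and multiplies `e_l` by `(-1)^l`, so the trace equals
`(1 - (-1)^l) * ((n - 2) * e_l(0) - ∑_{|z| = 1} e_l(z))`. Here `e_l(0) = C(n, l)`, and summing
over `|z| = 1` first, each `l`-subset `S` contributes `n - 2|S|`, giving `(n - 2l) C(n, l)`.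
-/

def Cdiag (n l : ℕ) (z : Fin n → Bool) : ℂ :=
  ∑ S ∈ powersetCard l (univ : Finset (Fin n)), ∏ i ∈ S, sgn (z i)

lemma trace_Pimat_mul_Cmat (n m l : ℕ) :
    trace (Pimat n m * Cmat n l) = ∑ z, if hw z = m then Cdiag n l z else 0 := by
  simp only [Pimat, Cmat, diagonal_mul_diagonal, trace_diagonal, ite_mul, one_mul, zero_mul, Cdiag]

lemma sgn_not (b : Bool) : sgn (!b) = -sgn b := by
  cases b <;> simp [sgn]

lemma Cdiag_not (n l : ℕ) (z : Fin n → Bool) :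
    Cdiag n l (fun i => !z i) = (-1) ^ l * Cdiag n l z := by
  rw [Cdiag, Cdiag, mul_sum]
  refine sum_congr rfl fun S hS => ?_
  rw [← (mem_powersetCard.mp hS).2, ← prod_neg]
  simp only [sgn_not]

lemma hw_le (n : ℕ) (z : Fin n → Bool) : hw z ≤ n := by
  simpa [hw] using card_filter_le univ fun i => z i = true

lemma hw_not (n : ℕ) (z : Fin n → Bool) : hw (fun i => !z i) = n - hw z := by
  have := card_filter_add_card_filter_not (s := univ) (p := fun i => z i = true)
  simp only [card_univ, Fintype.card_fin, Bool.not_eq_true] at this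
  simp only [hw, Bool.not_eq_true']
  omega

lemma trace_Pimat_mul_Cmat_of_add_eq {n m m' : ℕ} (h : m + m' = n) (l : ℕ) :
    trace (Pimat n m' * Cmat n l) = (-1) ^ l * trace (Pimat n m * Cmat n l) := by
  rw [trace_Pimat_mul_Cmat, trace_Pimat_mul_Cmat, mul_sum]
  have hnot : Function.Involutive fun (z : Fin n → Bool) i => !z i :=
    fun z => funext fun i => Bool.not_not (z i)
  refine Fintype.sum_bijective _ hnot.bijective _ _ fun z => ?_
  have hz : n - hw z = m ↔ hw z = m' := by have := hw_le n z; omega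
  simp only [hw_not, Cdiag_not, hz, mul_ite, mul_zero, ← mul_assoc, ← mul_pow, neg_one_mul,
    neg_neg, one_pow, one_mul]

lemma hw_eq_zero_iff {n : ℕ} (z : Fin n → Bool) : hw z = 0 ↔ z = fun _ => false := by
  simp [hw, filter_eq_empty_iff, funext_iff]

lemma hw_eq_one_iff {n : ℕ} (z : Fin n → Bool) :
    hw z = 1 ↔ ∃ j, (fun i => decide (i = j)) = z := by
  simp only [hw, card_eq_one, Finset.ext_iff, mem_filter, mem_univ, true_and, mem_singleton,
    funext_iff]
  refine exists_congr fun j => forall_congr' fun i => ?_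
  cases z i <;> simp [eq_comm]

lemma prod_sgn_decide_eq {ι : Type*} [DecidableEq ι] (S : Finset ι) (j : ι) :
    ∏ i ∈ S, sgn (decide (i = j)) = if j ∈ S then -1 else 1 := by
  rw [← prod_ite_eq' S j fun _ => (-1 : ℂ)]
  exact prod_congr rfl fun i _ => by by_cases h : i = j <;> simp [sgn, h]

lemma sum_ite_mem_neg_one_one {ι : Type*} [Fintype ι] [DecidableEq ι] (S : Finset ι) :
    ∑ j, (if j ∈ S then (-1 : ℂ) else 1) = Fintype.card ι - 2 * S.card := by
  have := card_filter_add_card_filter_not (s := univ) (p := (· ∈ S))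
  simp only [subset_univ, filter_mem_eq_of_subset, card_univ, sum_ite, sum_neg_distrib, sum_const,
    nsmul_eq_mul, mul_one] at this ⊢
  rw [← this]; push_cast; ring

lemma trace_Pimat_zero_mul_Cmat (n l : ℕ) : trace (Pimat n 0 * Cmat n l) = n.choose l := by
  simp [trace_Pimat_mul_Cmat, hw_eq_zero_iff, Cdiag, sgn]

lemma trace_Pimat_one_mul_Cmat (n l : ℕ) :
    trace (Pimat n 1 * Cmat n l) = (n - 2 * l) * n.choose l := by
  have h1 : univ.filter (fun z : Fin n → Bool => hw z = 1)
      = univ.image fun j i => decide (i = j) := by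
    ext z; simp [hw_eq_one_iff]
  have hinj : Function.Injective fun (j : Fin n) (i : Fin n) => decide (i = j) :=
    fun a b hab => by simpa using congrFun hab a
  rw [trace_Pimat_mul_Cmat, ← sum_filter, h1, sum_image fun a _ b _ => @hinj a b]
  simp only [Cdiag]
  rw [sum_comm]
  calc ∑ S ∈ powersetCard l univ, ∑ j, ∏ i ∈ S, sgn (decide (i = j))
      = ∑ S ∈ powersetCard l (univ : Finset (Fin n)), ((n : ℂ) - 2 * l) :=
        sum_congr rfl fun S hS => by
          simp only [prod_sgn_decide_eq, sum_ite_mem_neg_one_one, Fintype.card_fin,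
            (mem_powersetCard.mp hS).2]
    _ = (n - 2 * l) * n.choose l := by
        simp only [sum_const, card_powersetCard, card_univ, Fintype.card_fin, nsmul_eq_mul]
        ring

theorem stmt5_general (n l : ℕ) (hn : 2 ≤ n) :
    Matrix.trace (F3mat n * Cmat n l)
      = if Odd l then 4 * ((l : ℂ) - 1) * (Nat.choose n l : ℂ) else 0 := by
  have hn0 := trace_Pimat_mul_Cmat_of_add_eq (zero_add n) l
  have hn1 := trace_Pimat_mul_Cmat_of_add_eq (show 1 + (n - 1) = n by omega) l
  simp only [F3mat, sub_mul, smul_mul_assoc, trace_sub, trace_smul, hn0, hn1,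
    trace_Pimat_zero_mul_Cmat, trace_Pimat_one_mul_Cmat, smul_eq_mul]
  rcases Nat.even_or_odd l with he | ho
  · rw [if_neg (Nat.not_odd_iff_even.mpr he), he.neg_one_pow]
    ring
  · rw [if_pos ho, ho.neg_one_pow]
    ring

/-- `Tr(F_3 C_l) = 4(l-1)C(n,l)` for odd `l`, and `0` for even `l`. -/
theorem stmt5 (n l : ℕ) (hn : 2 ≤ n) (hl : l ≤ n) :
    Matrix.trace (F3mat n * Cmat n l)
      = if Odd l then 4 * ((l : ℂ) - 1) * (Nat.choose n l : ℂ) else 0 :=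
  stmt5_general n l hn
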